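/- arXiv:1705.06547 — 8 statements merged into one kernel-verified Lean document; each statement's English description precedes it below -/
import Mathlib

section
/- For all x > 0, ψ'(x) - 1/x - 1/(2x²) > 0, where ψ' is the trigamma function (derivative of the digamma function). -/
/-!
Write `R(x) = ψ'(x) - 1/x - 1/(2x²)`. The recurrence `ψ'(x + 1) = ψ'(x) - 1/x²` gives
`R(x) - R(x + 1) = 1/(2x²(x + 1)²) > 0`, so `R(x) ≥ R(x + n) ≥ -1/(x + n) - 1/(2(x + n)²)` for every
`n`, because `ψ' ≥ 0` by the convexity of `log Γ`. Letting `n → ∞` gives `R ≥ 0`, and one more step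
of the recurrence makes the inequality strict.
-/

noncomputable def digamma : ℝ → ℝ := deriv (fun y : ℝ => Real.log (Real.Gamma y))

open Real Filter Set Topology

lemma Complex.analyticAt_Gamma_of_re_pos {s : ℂ} (hs : 0 < s.re) : AnalyticAt ℂ Gamma s := by
  rw [analyticAt_iff_eventually_differentiableAt]
  filter_upwards [continuous_re.continuousAt.eventually (lt_mem_nhds hs)] with z hz
  refine differentiableAt_Gamma z fun m hm => ?_
  rw [hm] at hz
  simp only [neg_re, natCast_re, Left.neg_pos_iff] at hz
  exact (Nat.cast_nonneg m).not_gt hz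

lemma Real.analyticAt_Gamma {x : ℝ} (hx : 0 < x) : AnalyticAt ℝ Gamma x := by
  simpa [Complex.Gamma_ofReal] using
    (Complex.analyticAt_Gamma_of_re_pos (s := x) (by simpa using hx)).re_ofReal

lemma analyticOnNhd_log_Gamma : AnalyticOnNhd ℝ (fun y => log (Gamma y)) (Ioi 0) :=
  fun _ hx => (analyticAt_log (Gamma_pos_of_pos hx)).comp (analyticAt_Gamma hx)

lemma analyticOnNhd_digamma : AnalyticOnNhd ℝ digamma (Ioi 0) :=
  analyticOnNhd_log_Gamma.deriv

lemma digamma_add_one {x : ℝ} (hx : 0 < x) : digamma (x + 1) = digamma x + 1 / x := by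
  have hlog : (fun y => log (Gamma (y + 1))) =ᶠ[𝓝 x] fun y => log (Gamma y) + log y := by
    filter_upwards [eventually_gt_nhds hx] with y hy
    rw [Gamma_add_one hy.ne', log_mul hy.ne' (Gamma_pos_of_pos hy).ne', add_comm]
  rw [digamma, ← deriv_comp_add_const, hlog.deriv_eq,
    deriv_fun_add (analyticOnNhd_log_Gamma x hx).differentiableAt (differentiableAt_log hx.ne'),
    deriv_log, one_div]

lemma deriv_digamma_add_one {x : ℝ} (hx : 0 < x) :
    deriv digamma (x + 1) = deriv digamma x - 1 / x ^ 2 := by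
  have hrec : (fun y => digamma (y + 1)) =ᶠ[𝓝 x] fun y => digamma y + 1 / y := by
    filter_upwards [eventually_gt_nhds hx] with y hy
    exact digamma_add_one hy
  have hinv : HasDerivAt (fun y : ℝ => 1 / y) (-(1 / x ^ 2)) x := by
    simpa [one_div] using hasDerivAt_inv hx.ne'
  rw [← deriv_comp_add_const, hrec.deriv_eq,
    ((analyticOnNhd_digamma x hx).differentiableAt.hasDerivAt.fun_add hinv).deriv, sub_eq_add_neg]

lemma deriv_digamma_nonneg {x : ℝ} (hx : 0 < x) : 0 ≤ deriv digamma x := by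
  have hmono : MonotoneOn digamma (Ioi 0) :=
    convexOn_log_Gamma.monotoneOn_deriv fun y hy => (analyticOnNhd_log_Gamma y hy).differentiableAt
  rw [← derivWithin_of_isOpen isOpen_Ioi hx]
  exact hmono.derivWithin_nonneg

lemma tendsto_inv_add_inv_two_mul_sq :
    Tendsto (fun y : ℝ => 1 / y + 1 / (2 * y ^ 2)) atTop (𝓝 0) := by
  have h1 : Tendsto (fun y : ℝ => 1 / y) atTop (𝓝 0) := by
    simpa [one_div] using tendsto_inv_atTop_zero
  have h2 : Tendsto (fun y : ℝ => 1 / (2 * y ^ 2)) atTop (𝓝 0) := by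
    simp only [one_div]
    exact tendsto_inv_atTop_zero.comp
      ((tendsto_pow_atTop two_ne_zero).const_mul_atTop (by norm_num : (0 : ℝ) < 2))
  simpa using h1.add h2

noncomputable def trigammaRemainder (x : ℝ) : ℝ := deriv digamma x - 1 / x - 1 / (2 * x ^ 2)

lemma trigammaRemainder_sub_add_one {x : ℝ} (hx : 0 < x) :
    trigammaRemainder x - trigammaRemainder (x + 1) = 1 / (2 * x ^ 2 * (x + 1) ^ 2) := by
  rw [trigammaRemainder, trigammaRemainder, deriv_digamma_add_one hx]
  field_simp
  ring

lemma trigammaRemainder_add_one_lt {x : ℝ} (hx : 0 < x) :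
    trigammaRemainder (x + 1) < trigammaRemainder x := by
  have hgap : 0 < 1 / (2 * x ^ 2 * (x + 1) ^ 2) := by positivity
  linarith [trigammaRemainder_sub_add_one hx]

lemma trigammaRemainder_add_nat_le {x : ℝ} (hx : 0 < x) (n : ℕ) :
    trigammaRemainder (x + n) ≤ trigammaRemainder x := by
  induction n with
  | zero => simp
  | succ n ih =>
    push_cast
    rw [← add_assoc]
    exact (trigammaRemainder_add_one_lt (by positivity)).le.trans ih

lemma trigammaRemainder_nonneg {x : ℝ} (hx : 0 < x) : 0 ≤ trigammaRemainder x := by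
  have hlim : Tendsto (fun n : ℕ => -(1 / (x + n) + 1 / (2 * (x + n) ^ 2))) atTop (𝓝 0) := by
    simpa using (tendsto_inv_add_inv_two_mul_sq.comp
      (tendsto_atTop_add_const_left _ x tendsto_natCast_atTop_atTop)).neg
  refine le_of_tendsto hlim (Eventually.of_forall fun n => ?_)
  have hmono := trigammaRemainder_add_nat_le hx n
  rw [trigammaRemainder] at hmono
  linarith [deriv_digamma_nonneg (by positivity : 0 < x + n)]

theorem trigamma_sub_pos : ∀ x : ℝ, 0 < x →
    0 < deriv digamma x - 1 / x - 1 / (2 * x ^ 2) := by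
  intro x hx
  calc 0 ≤ trigammaRemainder (x + 1) := trigammaRemainder_nonneg (by positivity)
    _ < trigammaRemainder x := trigammaRemainder_add_one_lt hx
end

section
/- For all x > 0, ψ''(x) + (ψ'(x))² > 0, where ψ', ψ'' are the first and second derivatives of the digamma function. -/
/-!
Differentiating Euler's limit formula for `log Γ` term by term gives, for `x > 0`,
`ψ' x = ζ(2, x)` and `ψ'' x = -2 ζ(3, x)`, where `ζ(p, x) = ∑ₖ 1 / (x + k) ^ p` is
`hurwitzSum p x`. So the claim is `g x > 0` for `g = ζ(2, ·) ^ 2 - 2 ζ(3, ·)` (`gSeries`).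
The recurrence `ζ(p, x) = 1 / x ^ p + ζ(p, x + 1)` gives
`g x - g (x + 1) = 2 ζ(2, x + 1) / x ^ 2 + 1 / x ^ 4 - 2 / x ^ 3`, which the trapezoid bound
`ζ(2, w) ≥ 1 / w + 1 / (2 w ^ 2)` makes positive. Hence `n ↦ g (x + n)` decreases strictly to `0`.
-/

open Filter Topology Set Real

noncomputable def hurwitzSum (p : ℕ) (x : ℝ) : ℝ := ∑' k : ℕ, 1 / (x + k) ^ p

lemma summable_one_div_add_pow {x : ℝ} (hx : 0 < x) {p : ℕ} (hp : 1 < p) :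
    Summable fun k : ℕ => 1 / (x + k) ^ p := by
  refine ((summable_one_div_nat_add_rpow x p).2 (by exact_mod_cast hp)).congr fun k => ?_
  rw [abs_of_pos (by positivity), rpow_natCast, add_comm]

lemma norm_one_div_add_pow_le {a y : ℝ} (ha : 0 < a) (hy : a < y) (p k : ℕ) :
    ‖1 / (y + k) ^ p‖ ≤ 1 / (a + k) ^ p := by
  have := ha.trans hy
  rw [Real.norm_of_nonneg (by positivity)]
  gcongr

lemma hasDerivAt_one_div_add_pow (p : ℕ) {x c : ℝ} (hx : x + c ≠ 0) :
    HasDerivAt (fun y => 1 / (y + c) ^ p) (-p / (x + c) ^ (p + 1)) x := by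
  have hf : (fun y : ℝ => 1 / (y + c) ^ p) = fun y => (y + c) ^ (-(p : ℤ)) := by
    ext y
    rw [zpow_neg, zpow_natCast, one_div]
  rw [hf]
  refine ((hasDerivAt_zpow (-p : ℤ) (x + c) (Or.inl hx)).comp_add_const x c).congr_deriv ?_
  rw [show (-p : ℤ) - 1 = -((p + 1 : ℕ) : ℤ) by push_cast; ring, zpow_neg, zpow_natCast]
  push_cast
  ring

lemma hurwitzSum_eq_add {x : ℝ} (hx : 0 < x) {p : ℕ} (hp : 1 < p) :
    hurwitzSum p x = 1 / x ^ p + hurwitzSum p (x + 1) := by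
  rw [hurwitzSum, (summable_one_div_add_pow hx hp).tsum_eq_zero_add, hurwitzSum]
  push_cast
  simp only [add_zero, add_assoc, add_comm (1 : ℝ)]

lemma tendsto_hurwitzSum_add_nat (p : ℕ) (x : ℝ) :
    Tendsto (fun n : ℕ => hurwitzSum p (x + n)) atTop (𝓝 0) := by
  refine (tendsto_sum_nat_add fun k : ℕ => 1 / (x + k) ^ p).congr fun n => ?_
  simp only [hurwitzSum]
  push_cast
  simp only [add_assoc, add_comm (n : ℝ)]

lemma hasDerivAt_hurwitzSum {x : ℝ} (hx : 0 < x) {p : ℕ} (hp : 1 < p) :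
    HasDerivAt (hurwitzSum p) (-p * hurwitzSum (p + 1) x) x := by
  have ha : 0 < x / 2 := half_pos hx
  have h := hasDerivAt_tsum_of_isPreconnected
    ((summable_one_div_add_pow ha (by omega : 1 < p + 1)).mul_left (p : ℝ)) isOpen_Ioi
    isPreconnected_Ioi
    (fun k y (hy : x / 2 < y) => hasDerivAt_one_div_add_pow p (c := k)
      (by linarith [k.cast_nonneg (α := ℝ)]))
    (fun k y (hy : x / 2 < y) => ?_) (half_lt_self hx) (summable_one_div_add_pow hx hp)
    (half_lt_self hx)
  · rw [hurwitzSum, ← tsum_mul_left]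
    simp only [neg_div, mul_one_div] at h ⊢
    exact h
  · rw [neg_div, norm_neg, ← mul_one_div, norm_mul, Real.norm_natCast]
    gcongr
    exact norm_one_div_add_pow_le ha hy (p + 1) k

lemma Antitone.hasSum_sub_succ {b : ℕ → ℝ} (hb : Antitone b) (h : Tendsto b atTop (𝓝 0)) :
    HasSum (fun k => b k - b (k + 1)) (b 0) := by
  rw [hasSum_iff_tendsto_nat_of_nonneg (fun k => sub_nonneg.2 (hb k.le_succ))]
  simp_rw [Finset.sum_range_sub']
  simpa using tendsto_const_nhds.sub h

lemma one_div_add_one_div_two_mul_sq_le_hurwitzSum_two {w : ℝ} (hw : 0 < w) :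
    1 / w + 1 / (2 * w ^ 2) ≤ hurwitzSum 2 w := by
  set g : ℕ → ℝ := fun k => 1 / (w + k)
  have hpos (k : ℕ) : 0 < w + k := by positivity
  have hg : Tendsto g atTop (𝓝 0) :=
    ((tendsto_atTop_add_const_left atTop w tendsto_natCast_atTop_atTop).inv_tendsto_atTop).congr
      fun k => (one_div _).symm
  have hb : Antitone fun k => g k + g k ^ 2 / 2 := antitone_nat_of_succ_le fun k => by
    have hg_succ : g (k + 1) ≤ g k := by
      simp only [g]
      push_cast
      gcongr
      linarith
    have : 0 ≤ g (k + 1) := (one_div_pos.2 (hpos _)).le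
    gcongr
  have hsum := hb.hasSum_sub_succ (by simpa using hg.add ((hg.pow 2).div_const 2))
  refine le_of_eq_of_le (by simp [g]; ring) (hasSum_le (fun k => ?_) hsum
    (summable_one_div_add_pow hw one_lt_two).hasSum)
  -- the trapezoid rule for the convex function `1 / t ^ 2` on `[w + k, w + k + 1]`
  have := hpos k
  simp only [g]
  push_cast
  rw [← sub_nonneg]
  have e : 1 / (w + k) ^ 2 - (1 / (w + k) + (1 / (w + k)) ^ 2 / 2 -
      (1 / (w + (k + 1)) + (1 / (w + (k + 1))) ^ 2 / 2)) =
      1 / (2 * (w + k) ^ 2 * (w + k + 1) ^ 2) := by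
    field_simp
    ring
  rw [e]
  positivity

noncomputable def gSeries (x : ℝ) : ℝ := hurwitzSum 2 x ^ 2 - 2 * hurwitzSum 3 x

lemma gSeries_add_one_lt {z : ℝ} (hz : 0 < z) : gSeries (z + 1) < gSeries z := by
  have hT := one_div_add_one_div_two_mul_sq_le_hurwitzSum_two (w := z + 1) (by linarith)
  have hdiff : gSeries z - gSeries (z + 1) =
      2 * hurwitzSum 2 (z + 1) / z ^ 2 + 1 / z ^ 4 - 2 / z ^ 3 := by
    rw [gSeries, gSeries, hurwitzSum_eq_add hz one_lt_two, hurwitzSum_eq_add hz (by norm_num)]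
    field_simp
    ring
  have hlower : 2 * (1 / (z + 1) + 1 / (2 * (z + 1) ^ 2)) / z ^ 2 + 1 / z ^ 4 - 2 / z ^ 3 =
      1 / (z ^ 4 * (z + 1) ^ 2) := by
    field_simp
    ring
  have : 2 * (1 / (z + 1) + 1 / (2 * (z + 1) ^ 2)) / z ^ 2 ≤ 2 * hurwitzSum 2 (z + 1) / z ^ 2 := by
    gcongr
  have : 0 < 1 / (z ^ 4 * (z + 1) ^ 2) := by positivity
  linarith

lemma gSeries_pos {x : ℝ} (hx : 0 < x) : 0 < gSeries x := by
  set h : ℕ → ℝ := fun n => gSeries (x + n)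
  have hanti : StrictAnti h := strictAnti_nat_of_succ_lt fun n => by
    simpa only [h, Nat.cast_succ, add_assoc] using gSeries_add_one_lt (z := x + n) (by positivity)
  have hlim : Tendsto h atTop (𝓝 0) := by
    simpa [h, gSeries] using ((tendsto_hurwitzSum_add_nat 2 x).pow 2).sub
      ((tendsto_hurwitzSum_add_nat 3 x).const_mul 2)
  simpa [h] using (hanti.antitone.le_of_tendsto hlim 1).trans_lt (hanti zero_lt_one)

noncomputable def digammaSeries (x : ℝ) : ℝ :=
  -eulerMascheroniConstant + ∑' k : ℕ, (1 / ((k : ℝ) + 1) - 1 / (x + k))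

lemma hasDerivAt_digammaTerm (k : ℕ) {y : ℝ} (hy : 0 < y) :
    HasDerivAt (fun y => 1 / ((k : ℝ) + 1) - 1 / (y + k)) (1 / (y + k) ^ 2) y := by
  simpa [neg_div] using (hasDerivAt_const y (1 / ((k : ℝ) + 1))).fun_sub
    (hasDerivAt_one_div_add_pow 1 (c := k) (by positivity))

lemma summable_digammaTerm {x : ℝ} (hx : 0 < x) :
    Summable fun k : ℕ => 1 / ((k : ℝ) + 1) - 1 / (x + k) := by
  have ha : 0 < min x 1 / 2 := by positivity
  -- the terms vanish at `x = 1`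
  exact summable_of_summable_hasDerivAt_of_isPreconnected
    (summable_one_div_add_pow ha one_lt_two) isOpen_Ioi isPreconnected_Ioi
    (fun k _ hy => hasDerivAt_digammaTerm k (ha.trans hy))
    (fun k _ hy => norm_one_div_add_pow_le ha hy 2 k) (y₀ := 1)
    (by simp only [mem_Ioi]; linarith [min_le_right x 1]) (by simp [add_comm])
    (by simp only [mem_Ioi]; linarith [min_le_left x 1])

lemma hasDerivAt_digammaSeries {x : ℝ} (hx : 0 < x) :
    HasDerivAt digammaSeries (hurwitzSum 2 x) x := by
  have ha : 0 < x / 2 := half_pos hx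
  exact (hasDerivAt_tsum_of_isPreconnected (summable_one_div_add_pow ha one_lt_two) isOpen_Ioi
    isPreconnected_Ioi (fun k _ hy => hasDerivAt_digammaTerm k (ha.trans hy))
    (fun k _ hy => norm_one_div_add_pow_le ha hy 2 k) (half_lt_self hx) (summable_digammaTerm hx)
    (half_lt_self hx)).const_add _

lemma abs_digammaTerm_le (m : ℕ) {a b x : ℝ} (ha : 0 < a) (hx : x ∈ Ioo a b) :
    |1 / ((m : ℝ) + 1) - 1 / (x + m)| ≤
      |1 / ((m : ℝ) + 1) - 1 / (a + m)| + |1 / ((m : ℝ) + 1) - 1 / (b + m)| := by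
  have hxm : 0 < x + m := by linarith [hx.1, m.cast_nonneg (α := ℝ)]
  have hl : 1 / ((m : ℝ) + 1) - 1 / (a + m) ≤ 1 / ((m : ℝ) + 1) - 1 / (x + m) := by
    gcongr
    exact hx.1.le
  have hr : 1 / ((m : ℝ) + 1) - 1 / (x + m) ≤ 1 / ((m : ℝ) + 1) - 1 / (b + m) := by
    gcongr
    exact hx.2.le
  exact (abs_le_max_abs_abs hl hr).trans (max_le_add_of_nonneg (abs_nonneg _) (abs_nonneg _))

lemma tendsto_log_sub_harmonic :
    Tendsto (fun n : ℕ => log n - ∑ m ∈ Finset.range (n + 1), 1 / ((m : ℝ) + 1)) atTop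
      (𝓝 (-eulerMascheroniConstant)) := by
  have := tendsto_harmonic_sub_log.neg.sub tendsto_one_div_add_atTop_nhds_zero_nat
  refine (sub_zero (-eulerMascheroniConstant) ▸ this).congr fun n => ?_
  simp only [Finset.sum_range_succ, harmonic, one_div]
  push_cast
  ring

open Real.BohrMollerup in
lemma hasDerivAt_logGammaSeq (n : ℕ) {x : ℝ} (hx : 0 < x) :
    HasDerivAt (fun y => logGammaSeq y n)
      (log n - ∑ m ∈ Finset.range (n + 1), 1 / (x + m)) x := by
  have hsum : HasDerivAt (fun y => ∑ m ∈ Finset.range (n + 1), log (y + m))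
      (∑ m ∈ Finset.range (n + 1), 1 / (x + m)) x :=
    HasDerivAt.fun_sum fun m _ => by
      simpa using ((hasDerivAt_id x).add_const (m : ℝ)).log (by positivity)
  exact ((hasDerivAt_mul_const (log n)).add_const _).fun_sub hsum

lemma tendstoUniformlyOn_digammaSeries {a b : ℝ} (ha : 0 < a) (hb : 0 < b) :
    TendstoUniformlyOn (fun (n : ℕ) (x : ℝ) => log n - ∑ m ∈ Finset.range (n + 1), 1 / (x + m))
      digammaSeries atTop (Ioo a b) := by
  have hsum := tendstoUniformlyOn_tsum_nat
    ((summable_digammaTerm ha).abs.add (summable_digammaTerm hb).abs)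
    fun m x hx => (Real.norm_eq_abs _).trans_le (abs_digammaTerm_le m ha hx)
  have hsum_succ := fun v hv => (tendsto_add_atTop_nat 1).eventually (hsum v hv)
  refine ((tendsto_log_sub_harmonic.tendstoUniformlyOn_const _).add hsum_succ).congr
    (Eventually.of_forall fun n x _ => ?_)
  simp only [Pi.add_apply, Finset.sum_sub_distrib]
  ring

lemma hasDerivAt_log_Gamma {x : ℝ} (hx : 0 < x) :
    HasDerivAt (fun y => log (Gamma y)) (digammaSeries x) x :=
  hasDerivAt_of_tendstoUniformlyOn isOpen_Ioo
    (tendstoUniformlyOn_digammaSeries (half_pos hx) (by linarith))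
    (Eventually.of_forall fun n y hy => hasDerivAt_logGammaSeq n ((half_pos hx).trans hy.1))
    (fun y hy => BohrMollerup.tendsto_log_gamma ((half_pos hx).trans hy.1))
    (⟨half_lt_self hx, lt_add_one x⟩ : x ∈ Ioo (x / 2) (x + 1))

lemma digamma_eqOn : EqOn digamma digammaSeries (Ioi 0) :=
  fun _ hx => (hasDerivAt_log_Gamma hx).deriv

lemma deriv_digamma {x : ℝ} (hx : 0 < x) : deriv digamma x = hurwitzSum 2 x := by
  rw [(digamma_eqOn.eventuallyEq_of_mem (Ioi_mem_nhds hx)).deriv_eq,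
    (hasDerivAt_digammaSeries hx).deriv]

lemma iteratedDeriv_two_digamma {x : ℝ} (hx : 0 < x) :
    iteratedDeriv 2 digamma x = -2 * hurwitzSum 3 x := by
  have h : EqOn (deriv digamma) (hurwitzSum 2) (Ioi 0) := fun _ hy => deriv_digamma hy
  rw [iteratedDeriv_succ, iteratedDeriv_one, (h.eventuallyEq_of_mem (Ioi_mem_nhds hx)).deriv_eq,
    (hasDerivAt_hurwitzSum hx one_lt_two).deriv]
  norm_num

theorem g_pos : ∀ x : ℝ, 0 < x →
    0 < iteratedDeriv 2 digamma x + (deriv digamma x) ^ 2 := by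
  intro x hx
  rw [iteratedDeriv_two_digamma hx, deriv_digamma hx]
  have := gSeries_pos hx
  rw [gSeries] at this
  linarith
end

section
/- For all real x, 1/log(1 + e^{-x}) < ψ^{-1}(x) < e^x + 1/2, where ψ^{-1} is the inverse of the digamma function restricted to (0,∞). -/
open Real Set Filter Topology

lemma differentiableAt_log_Gamma {t : ℝ} (ht : 0 < t) :
    DifferentiableAt ℝ (fun y => log (Gamma y)) t :=
  (differentiableAt_Gamma fun m => ((neg_nonpos.mpr m.cast_nonneg).trans_lt ht).ne').log
    (Gamma_pos_of_pos ht).ne'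

lemma digamma_add_one_s6 {t : ℝ} (ht : 0 < t) : digamma (t + 1) = digamma t + t⁻¹ := by
  unfold digamma
  rw [← deriv_comp_add_const, ← deriv_log, ← deriv_add (differentiableAt_log_Gamma ht)
    (differentiableAt_log ht.ne')]
  refine Filter.EventuallyEq.deriv_eq ?_
  filter_upwards [eventually_gt_nhds ht] with y hy
  rw [Gamma_add_one hy.ne', log_mul hy.ne' (Gamma_pos_of_pos hy).ne', add_comm]
  rfl

lemma slope_log_Gamma_add_one {t : ℝ} (ht : 0 < t) :
    slope (log ∘ Gamma) t (t + 1) = log t := by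
  rw [slope_def_field, Function.comp_apply, Function.comp_apply, Gamma_add_one ht.ne',
    log_mul ht.ne' (Gamma_pos_of_pos ht).ne']
  ring

lemma digamma_le_log {t : ℝ} (ht : 0 < t) : digamma t ≤ log t :=
  slope_log_Gamma_add_one ht ▸ convexOn_log_Gamma.deriv_le_slope ht
    (mem_Ioi.2 (ht.trans (lt_add_one t))) (lt_add_one t) (differentiableAt_log_Gamma ht)

lemma log_le_digamma_add_one {t : ℝ} (ht : 0 < t) : log t ≤ digamma (t + 1) :=
  have ht' : 0 < t + 1 := ht.trans (lt_add_one t)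
  slope_log_Gamma_add_one ht ▸ convexOn_log_Gamma.slope_le_deriv ht ht' (lt_add_one t)
    (differentiableAt_log_Gamma ht')

lemma log_sub_inv_le_digamma {t : ℝ} (ht : 0 < t) : log t - t⁻¹ ≤ digamma t := by
  linarith [log_le_digamma_add_one ht, digamma_add_one_s6 ht]

lemma pos_of_apply_add_one_lt {F g : ℝ → ℝ} {c t : ℝ} (hstep : ∀ s, c < s → F (s + 1) < F s)
    (hg : Tendsto g atTop (𝓝 0)) (hgF : ∀ s, c < s → g s ≤ F s) (ht : c < t) : 0 < F t := by
  have hlt : ∀ n : ℕ, c < t + 1 + n := fun n => by linarith [n.cast_nonneg (α := ℝ)]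
  have hchain : ∀ n : ℕ, F (t + 1 + n) ≤ F (t + 1) := by
    intro n
    induction n with
    | zero => simp
    | succ n ih =>
      push_cast
      rw [← add_assoc]
      exact (hstep _ (hlt n)).le.trans ih
  have hlim : Tendsto (fun n : ℕ => g (t + 1 + n)) atTop (𝓝 0) :=
    hg.comp (tendsto_atTop_add_const_left _ _ tendsto_natCast_atTop_atTop)
  have hF : 0 ≤ F (t + 1) := le_of_tendsto' hlim fun n => (hgF _ (hlt n)).trans (hchain n)
  exact hF.trans_lt (hstep t ht)

lemma log_two_sub_exp_neg_lt {u : ℝ} (hu : 0 < u) : log (2 - exp (-u)) < u / (1 + u) := by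
  set h : ℝ → ℝ := fun v => v / (1 + v) - log (2 - exp (-v))
  have hpos : ∀ v, 0 ≤ v → 0 < 2 - exp (-v) := fun v hv => by
    linarith [exp_le_one_iff.2 (neg_nonpos.2 hv)]
  have hderiv : ∀ v, 0 ≤ v →
      HasDerivAt h (1 / (1 + v) ^ 2 - exp (-v) / (2 - exp (-v))) v := by
    intro v hv
    have h1 : HasDerivAt (fun v : ℝ => v / (1 + v)) (1 / (1 + v) ^ 2) v :=
      ((hasDerivAt_id' v).div ((hasDerivAt_id' v).const_add 1) (by linarith)).congr_deriv
        (by ring)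
    have h2 : HasDerivAt (fun v => 2 - exp (-v)) (exp (-v)) v := by
      simpa using ((hasDerivAt_neg v).exp).const_sub 2
    exact h1.sub (h2.log (hpos v hv).ne')
  have hmono : StrictMonoOn h (Ici 0) := by
    refine strictMonoOn_of_deriv_pos (convex_Ici 0)
      (fun v hv => (hderiv v hv).continuousAt.continuousWithinAt) fun v hv => ?_
    rw [interior_Ici] at hv
    have hv : 0 < v := hv
    rw [(hderiv v hv.le).deriv, sub_pos, div_lt_div_iff₀ (hpos v hv.le) (by positivity)]
    have hcubic : 1 + v + v ^ 2 / 2 < exp v := by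
      have := sum_le_exp_of_nonneg hv.le 4
      norm_num [Finset.sum_range_succ, Nat.factorial] at this
      nlinarith [pow_pos hv 3]
    -- the derivative is positive iff `(1 + v) ^ 2 + 1 < 2 * exp v`
    rw [exp_neg, one_mul, ← sub_pos]
    field_simp
    nlinarith
  have := hmono self_mem_Ici hu.le hu
  norm_num [h] at this
  exact this

lemma log_exp_inv_sub_one_sub_inv_lt {s : ℝ} (hs : 0 < s) :
    log (exp s⁻¹ - 1) - s⁻¹ < log (exp (s + 1)⁻¹ - 1) := by
  set u := s⁻¹ with hu_def
  have hu : 0 < u := inv_pos.2 hs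
  have hshift : (s + 1)⁻¹ = u / (1 + u) := by
    rw [hu_def]
    field_simp
  have hexp : 0 < exp u - 1 := sub_pos.2 (one_lt_exp_iff.2 hu)
  have hkey : 2 - exp (-u) < exp (u / (1 + u)) :=
    (log_lt_iff_lt_exp (by linarith [exp_lt_one_iff.2 (neg_lt_zero.2 hu)])).1
      (log_two_sub_exp_neg_lt hu)
  have hmul : exp u - 1 < exp u * (exp (u / (1 + u)) - 1) := by
    have := mul_lt_mul_of_pos_left hkey (exp_pos u)
    rw [mul_sub, ← exp_add, add_neg_cancel, exp_zero] at this
    linear_combination this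
  have hexp' : 0 < exp (u / (1 + u)) - 1 := sub_pos.2 (one_lt_exp_iff.2 (by positivity))
  have := log_lt_log hexp hmul
  rw [log_mul (exp_pos u).ne' hexp'.ne', log_exp] at this
  rw [hshift]
  linarith

lemma log_exp_sub_one_lt {u : ℝ} (hu : 0 < u) : log (exp u - 1) < log u + u := by
  have hlt : exp u - 1 < u * exp u := by
    have := mul_lt_mul_of_pos_right (one_sub_lt_exp_neg hu.ne') (exp_pos u)
    rw [← exp_add, neg_add_cancel, exp_zero] at this
    linarith
  calc log (exp u - 1) < log (u * exp u) := log_lt_log (sub_pos.2 (one_lt_exp_iff.2 hu)) hlt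
    _ = log u + u := by rw [log_mul hu.ne' (exp_pos u).ne', log_exp]

lemma inv_lt_log_add_half_sub_log_sub_half {s : ℝ} (hs : 1 / 2 < s) :
    s⁻¹ < log (s + 1 / 2) - log (s - 1 / 2) := by
  have hs' : 0 < s - 1 / 2 := by linarith
  have hseries := sum_le_hasSum (Finset.range 2) (fun k _ => by positivity)
    (hasSum_log_one_add_inv hs')
  have hlog : log (1 + (s - 1 / 2)⁻¹) = log (s + 1 / 2) - log (s - 1 / 2) := by
    rw [← log_div (by linarith) hs'.ne']
    congr 1
    rw [eq_div_iff hs'.ne', add_mul, inv_mul_cancel₀ hs'.ne']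
    ring
  rw [hlog, show 2 * (s - 1 / 2) + 1 = 2 * s by ring] at hseries
  norm_num [Finset.sum_range_succ] at hseries
  have hcube : 0 < 2 / 3 * (s⁻¹ * (1 / 2)) ^ 3 := by
    have : 0 < s := by linarith
    positivity
  linarith

lemma digamma_lt_neg_log_exp_inv_sub_one {t : ℝ} (ht : 0 < t) :
    digamma t < -log (exp t⁻¹ - 1) := by
  have hstep (s : ℝ) (hs : 0 < s) :
      -log (exp (s + 1)⁻¹ - 1) - digamma (s + 1) < -log (exp s⁻¹ - 1) - digamma s := by
    linarith [log_exp_inv_sub_one_sub_inv_lt hs, digamma_add_one_s6 hs]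
  have hbound (s : ℝ) (hs : 0 < s) : -s⁻¹ ≤ -log (exp s⁻¹ - 1) - digamma s := by
    linarith [log_exp_sub_one_lt (inv_pos.2 hs), log_inv s, digamma_le_log hs]
  have hlim : Tendsto (fun s : ℝ => -s⁻¹) atTop (𝓝 0) := by
    simpa using (tendsto_inv_atTop_zero (𝕜 := ℝ)).neg
  linarith [pos_of_apply_add_one_lt hstep hlim hbound ht]

lemma log_sub_half_lt_digamma {t : ℝ} (ht : 1 / 2 < t) : log (t - 1 / 2) < digamma t := by
  have hstep (s : ℝ) (hs : 1 / 2 < s) :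
      digamma (s + 1) - log (s + 1 - 1 / 2) < digamma s - log (s - 1 / 2) := by
    have := inv_lt_log_add_half_sub_log_sub_half hs
    rw [digamma_add_one_s6 (by linarith), show s + 1 - 1 / 2 = s + 1 / 2 by ring]
    linarith
  have hbound (s : ℝ) (hs : 1 / 2 < s) : -s⁻¹ ≤ digamma s - log (s - 1 / 2) := by
    linarith [log_sub_inv_le_digamma (by linarith : 0 < s),
      log_lt_log (by linarith : 0 < s - 1 / 2) (by linarith : s - 1 / 2 < s)]
  have hlim : Tendsto (fun s : ℝ => -s⁻¹) atTop (𝓝 0) := by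
    simpa using (tendsto_inv_atTop_zero (𝕜 := ℝ)).neg
  linarith [pos_of_apply_add_one_lt hstep hlim hbound ht]

lemma one_div_log_one_add_exp_neg_digamma_lt {t : ℝ} (ht : 0 < t) :
    1 / log (1 + exp (-digamma t)) < t := by
  have hexp : 0 < exp t⁻¹ - 1 := sub_pos.2 (one_lt_exp_iff.2 (inv_pos.2 ht))
  have h1 : exp t⁻¹ - 1 < exp (-digamma t) :=
    (log_lt_iff_lt_exp hexp).1 (by linarith [digamma_lt_neg_log_exp_inv_sub_one ht])
  have h2 : t⁻¹ < log (1 + exp (-digamma t)) :=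
    (lt_log_iff_exp_lt (by positivity)).2 (by linarith)
  rw [one_div]
  exact inv_lt_of_inv_lt₀ ht h2

lemma lt_exp_digamma_add_half (t : ℝ) : t < exp (digamma t) + 1 / 2 := by
  rcases le_or_gt t (1 / 2) with ht | ht
  · linarith [exp_pos (digamma t)]
  · linarith [(log_lt_iff_lt_exp (by linarith)).1 (log_sub_half_lt_digamma ht)]

theorem inv_digamma_bounds (x : ℝ) (y : ℝ) (hy : 0 < y) (h : digamma y = x) :
    1 / Real.log (1 + Real.exp (-x)) < y ∧ y < Real.exp x + 1 / 2 := by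
  subst h
  exact ⟨one_div_log_one_add_exp_neg_digamma_lt hy, lt_exp_digamma_add_half y⟩
end

section
/- For fixed x > 0, the function φ(k) = 1/log(1 + 1/(x+k-1)) - k is strictly increasing in k on [1,∞), and lim_{k→∞} φ(k) = x - 1/2. -/
/-!
With `t = x + k - 1` the function is `ψ(t) + (x - 1)` for `ψ(t) = 1 / log (1 + 1/t) - t`.
The inequality `2 log s < s - s⁻¹` for `s > 1` (that is, `u < sinh u` for `u = log s > 0`) drives
everything: at `s = √(1 + 1/t)` it gives `log (1 + 1/t) ^ 2 * t (t + 1) < 1`, which is exactly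
`ψ' > 0`; at `s = 1 + 1/t` it gives `ψ(t) > t / (2t + 1)`, while the first term of the series
`log (1 + 1/t) = 2 artanh (1 / (2t + 1))` gives `ψ(t) ≤ 1/2`, so `ψ(t) → 1/2`.
-/

open Filter Set Topology

namespace Real

theorem two_mul_log_lt_sub_inv {s : ℝ} (hs : 1 < s) : 2 * log s < s - s⁻¹ := by
  have h := self_lt_sinh_iff.2 (log_pos hs)
  rw [sinh_log (by linarith)] at h
  linarith

theorem log_one_add_inv_pos {t : ℝ} (ht : 0 < t) : 0 < log (1 + t⁻¹) :=
  log_pos (lt_add_of_pos_right 1 (inv_pos.2 ht))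

theorem log_one_add_inv_lt {t : ℝ} (ht : 0 < t) :
    log (1 + t⁻¹) < (2 * t + 1) / (2 * t * (t + 1)) := by
  have h := two_mul_log_lt_sub_inv (lt_add_of_pos_right 1 (inv_pos.2 ht))
  have e : 1 + t⁻¹ - (1 + t⁻¹)⁻¹ = 2 * ((2 * t + 1) / (2 * t * (t + 1))) := by
    field_simp
    ring
  linarith

theorem two_div_le_log_one_add_inv {t : ℝ} (ht : 0 < t) : 2 / (2 * t + 1) ≤ log (1 + t⁻¹) := by
  have h := le_hasSum (hasSum_log_one_add_inv ht) 0 fun k _ => by positivity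
  simpa [div_eq_mul_inv] using h

theorem log_one_add_inv_sq_mul_lt_one {t : ℝ} (ht : 0 < t) :
    log (1 + t⁻¹) ^ 2 * (t * (t + 1)) < 1 := by
  set s := √(1 + t⁻¹)
  have hs2 : s ^ 2 = 1 + t⁻¹ := sq_sqrt (by positivity)
  have hs : 1 < s := by
    rw [lt_sqrt zero_le_one]
    simpa using ht
  have hlog : log (1 + t⁻¹) = 2 * log s := by
    rw [log_sqrt (by positivity)]
    ring
  have hsub : (s - s⁻¹) ^ 2 * (t * (t + 1)) = 1 := by
    have hsq : (s - s⁻¹) ^ 2 = s ^ 2 - 2 + (s ^ 2)⁻¹ := by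
      field_simp
      ring
    rw [hsq, hs2]
    field_simp
    ring
  have hlt : log (1 + t⁻¹) ^ 2 < (s - s⁻¹) ^ 2 := by
    rw [hlog]
    exact pow_lt_pow_left₀ (two_mul_log_lt_sub_inv hs) (by positivity [log_pos hs]) two_ne_zero
  calc log (1 + t⁻¹) ^ 2 * (t * (t + 1)) < (s - s⁻¹) ^ 2 * (t * (t + 1)) := by gcongr
    _ = 1 := hsub

theorem hasDerivAt_inv_log_one_add_inv_sub {t : ℝ} (ht : 0 < t) :
    HasDerivAt (fun t => (log (1 + t⁻¹))⁻¹ - t)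
      ((log (1 + t⁻¹) ^ 2 * (t * (t + 1)))⁻¹ - 1) t := by
  have h : HasDerivAt (fun t => (log (1 + t⁻¹))⁻¹ - t)
      (-(-(t ^ 2)⁻¹ / (1 + t⁻¹)) / log (1 + t⁻¹) ^ 2 - 1) t :=
    ((((hasDerivAt_inv ht.ne').const_add 1).log (by positivity)).inv
      (log_one_add_inv_pos ht).ne').sub (hasDerivAt_id' t)
  convert h using 2
  field_simp

theorem strictMonoOn_inv_log_one_add_inv_sub :
    StrictMonoOn (fun t => (log (1 + t⁻¹))⁻¹ - t) (Ioi 0) := by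
  refine strictMonoOn_of_deriv_pos (convex_Ioi 0) ?_ fun t ht => ?_
  · exact HasDerivAt.continuousOn fun t ht => hasDerivAt_inv_log_one_add_inv_sub ht
  rw [interior_Ioi, mem_Ioi] at ht
  rw [(hasDerivAt_inv_log_one_add_inv_sub ht).deriv, sub_pos]
  have hpos := mul_pos (pow_pos (log_one_add_inv_pos ht) 2) (by positivity : 0 < t * (t + 1))
  exact (one_lt_inv₀ hpos).2 (log_one_add_inv_sq_mul_lt_one ht)

theorem tendsto_inv_log_one_add_inv_sub :
    Tendsto (fun t => (log (1 + t⁻¹))⁻¹ - t) atTop (𝓝 (1 / 2)) := by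
  have hlower : Tendsto (fun t : ℝ => (2 + t⁻¹)⁻¹) atTop (𝓝 (1 / 2)) := by
    simpa using (tendsto_inv_atTop_zero.const_add (2 : ℝ)).inv₀ (by norm_num)
  refine tendsto_of_tendsto_of_tendsto_of_le_of_le' hlower tendsto_const_nhds ?_ ?_
  all_goals filter_upwards [eventually_gt_atTop 0] with t ht
  · have e : (2 + t⁻¹)⁻¹ + t = ((2 * t + 1) / (2 * t * (t + 1)))⁻¹ := by
      field_simp
      ring
    have h := (inv_lt_inv₀ (by positivity) (log_one_add_inv_pos ht)).2 (log_one_add_inv_lt ht)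
    linarith
  · have h := inv_anti₀ (by positivity) (two_div_le_log_one_add_inv ht)
    rw [inv_div] at h
    linarith

end Real

open Filter in
theorem phi_strictMono_and_limit (x : ℝ) (hx : 0 < x) :
    StrictMonoOn (fun k : ℝ => 1 / Real.log (1 + 1 / (x + k - 1)) - k) (Set.Ici (1 : ℝ)) ∧
      Tendsto (fun k : ℝ => 1 / Real.log (1 + 1 / (x + k - 1)) - k) atTop
        (nhds (x - 1 / 2)) := by
  have hφ : (fun k : ℝ => 1 / Real.log (1 + 1 / (x + k - 1)) - k) =
      fun k => ((Real.log (1 + (x + k - 1)⁻¹))⁻¹ - (x + k - 1)) + (x - 1) := by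
    funext k
    simp only [one_div]
    ring
  have hshift : StrictMono fun k : ℝ => x + k - 1 := fun a b hab => by simp [hab]
  rw [hφ]
  constructor
  · refine fun a ha b hb hab => add_lt_add_left ?_ _
    exact Real.strictMonoOn_inv_log_one_add_inv_sub (mem_Ioi.2 (by linarith [mem_Ici.1 ha]))
      (mem_Ioi.2 (by linarith [mem_Ici.1 hb])) (hshift hab)
  · have hshift_tendsto : Tendsto (fun k : ℝ => x + k - 1) atTop atTop :=
      tendsto_atTop_add_const_right _ (-1) (tendsto_atTop_add_const_left _ x tendsto_id)
    have h := (Real.tendsto_inv_log_one_add_inv_sub.comp hshift_tendsto).add_const (x - 1)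
    rwa [show (1 : ℝ) / 2 + (x - 1) = x - 1 / 2 by ring] at h
end

section
/- For every positive integer n, the function u ↦ [ (u^{-n} - (u+1)^{-n})/n ]^{-1/(n+1)} - u is strictly increasing on (0,∞). -/
/-! Write `G s u = (u ^ (-s) - (u + 1) ^ (-s)) / s = ∫ x in u..u+1, x ^ (-s - 1)` (`invPowDiff`).
Then `∂G s/∂u = -(s + 1) * G (s + 1)`, so the derivative of `G s u ^ (-1 / (s + 1)) - u` is
`G (s + 1) u / G s u ^ ((s + 2) / (s + 1)) - 1`. It is positive by the strict Jensen inequality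
for the strictly convex `t ↦ t ^ ((s + 2) / (s + 1))` and the injective `x ↦ x ^ (-s - 1)`
averaged over `[u, u + 1]`. -/

open Set MeasureTheory intervalIntegral

theorem StrictConvexOn.map_interval_average_lt_of_injOn {s : Set ℝ} {φ f : ℝ → ℝ} {a b : ℝ}
    (hφ : StrictConvexOn ℝ s φ) (hφc : ContinuousOn φ s) (hs : IsClosed s) (hab : a < b)
    (hf : ContinuousOn f (Icc a b)) (hinj : InjOn f (Ioc a b)) (hfs : MapsTo f (Icc a b) s) :
    φ (⨍ x in a..b, f x) < ⨍ x in a..b, φ (f x) := by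
  rw [uIoc_of_le hab.le]
  have hfi : IntegrableOn f (Ioc a b) := hf.integrableOn_Icc.mono_set Ioc_subset_Icc_self
  have hφfi : IntegrableOn (φ ∘ f) (Ioc a b) :=
    (hφc.comp hf hfs).integrableOn_Icc.mono_set Ioc_subset_Icc_self
  have hfs' : ∀ᵐ x ∂volume.restrict (Ioc a b), f x ∈ s :=
    (ae_restrict_mem measurableSet_Ioc).mono fun x hx => hfs (Ioc_subset_Icc_self hx)
  refine (hφ.ae_eq_const_or_map_average_lt hφc hs hfs' hfi hφfi).resolve_left fun hconst => ?_
  set c := ⨍ x in Ioc a b, f x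
  rw [Filter.EventuallyEq, ae_restrict_iff' measurableSet_Ioc, ae_iff] at hconst
  have hlevel : (Ioc a b ∩ f ⁻¹' {c}).Subsingleton := fun x hx y hy =>
    hinj hx.1 hy.1 (hx.2.trans hy.2.symm)
  have hnull : volume (Ioc a b) = 0 := by
    refine measure_mono_null (fun x hx => ?_)
      (measure_union_null hconst (hlevel.measure_zero volume))
    by_cases hfx : f x = c
    · exact Or.inr ⟨hx, hfx⟩
    · exact Or.inl fun h => hfx (h hx)
  simp only [Real.volume_Ioc, ENNReal.ofReal_eq_zero] at hnull
  linarith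

theorem rpow_interval_average_rpow_lt {a b p q : ℝ} (ha : 0 < a) (hab : a < b) (hq : q ≠ 0)
    (hp : 1 < p) : (⨍ x in a..b, x ^ q) ^ p < ⨍ x in a..b, x ^ (q * p) := by
  have hpos : ∀ x ∈ Icc a b, 0 < x := fun x hx => ha.trans_le hx.1
  calc (⨍ x in a..b, x ^ q) ^ p < ⨍ x in a..b, (x ^ q) ^ p :=
        (strictConvexOn_rpow hp).map_interval_average_lt_of_injOn
          (continuousOn_id.rpow_const fun _ _ => Or.inr (zero_le_one.trans hp.le)) isClosed_Ici hab
          (continuousOn_id.rpow_const fun x hx => Or.inl (hpos x hx).ne')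
          ((Real.rpow_left_injOn hq).mono fun x hx => (hpos x (Ioc_subset_Icc_self hx)).le)
          (fun x hx => Real.rpow_nonneg (hpos x hx).le q)
    _ = ⨍ x in a..b, x ^ (q * p) := by
        rw [interval_average_eq, interval_average_eq, integral_congr fun x hx => ?_]
        rw [uIcc_of_le hab.le] at hx
        exact (Real.rpow_mul (hpos x hx).le q p).symm

noncomputable def invPowDiff (s u : ℝ) : ℝ := (u ^ (-s) - (u + 1) ^ (-s)) / s

theorem invPowDiff_eq_integral {s u : ℝ} (hs : s ≠ 0) (hu : 0 < u) :
    invPowDiff s u = ∫ x in u..u + 1, x ^ (-s - 1) := by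
  have h0 : (0 : ℝ) ∉ uIcc u (u + 1) := by
    rw [uIcc_of_le (by linarith)]
    exact fun h => hu.not_ge h.1
  rw [integral_rpow (Or.inr ⟨by simpa using hs, h0⟩), sub_add_cancel, invPowDiff, div_neg,
    ← neg_div, neg_sub]

theorem invPowDiff_pos {s u : ℝ} (hs : 0 < s) (hu : 0 < u) : 0 < invPowDiff s u :=
  div_pos (sub_pos.2 (Real.rpow_lt_rpow_of_neg hu (lt_add_one u) (neg_neg_of_pos hs))) hs

theorem invPowDiff_rpow_lt {s u : ℝ} (hs : 0 < s) (hu : 0 < u) :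
    invPowDiff s u ^ ((s + 2) / (s + 1)) < invPowDiff (s + 1) u := by
  have h := rpow_interval_average_rpow_lt (q := -s - 1) (p := (s + 2) / (s + 1)) hu
    (lt_add_one u) (by linarith) ((one_lt_div (by linarith)).2 (by linarith))
  rwa [interval_average_eq, interval_average_eq, add_sub_cancel_left, inv_one, one_smul,
    one_smul, ← invPowDiff_eq_integral hs.ne' hu,
    show (-s - 1) * ((s + 2) / (s + 1)) = -(s + 1) - 1 by field_simp; ring,
    ← invPowDiff_eq_integral (by linarith) hu] at h

theorem hasDerivAt_invPowDiff {s u : ℝ} (hs : 0 < s) (hu : 0 < u) :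
    HasDerivAt (invPowDiff s) (-(s + 1) * invPowDiff (s + 1) u) u := by
  have h1 : HasDerivAt (fun x => x ^ (-s)) (-s * u ^ (-s - 1)) u :=
    Real.hasDerivAt_rpow_const (Or.inl hu.ne')
  have h2 : HasDerivAt (fun x => (x + 1) ^ (-s)) (1 * -s * (u + 1) ^ (-s - 1)) u :=
    ((hasDerivAt_id u).add_const 1).rpow_const (Or.inl (by positivity))
  refine ((h1.sub h2).div_const s).congr_deriv ?_
  rw [invPowDiff, neg_add']
  field_simp
  ring

theorem strictMonoOn_invPowDiff_rpow_sub {s : ℝ} (hs : 0 < s) :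
    StrictMonoOn (fun u => invPowDiff s u ^ (-1 / (s + 1)) - u) (Ioi 0) := by
  have hderiv : ∀ u ∈ Ioi (0 : ℝ), HasDerivAt (fun u => invPowDiff s u ^ (-1 / (s + 1)) - u)
      (invPowDiff (s + 1) u / invPowDiff s u ^ ((s + 2) / (s + 1)) - 1) u := by
    intro u hu
    have hG := invPowDiff_pos hs hu
    refine (((hasDerivAt_invPowDiff hs hu).rpow_const (p := -1 / (s + 1))
      (Or.inl hG.ne')).sub (hasDerivAt_id u)).congr_deriv ?_
    rw [show -1 / (s + 1) - 1 = -((s + 2) / (s + 1)) by field_simp; ring, Real.rpow_neg hG.le]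
    field_simp
  refine strictMonoOn_of_deriv_pos (convex_Ioi 0)
    (fun u hu => (hderiv u hu).continuousAt.continuousWithinAt) fun u hu => ?_
  rw [interior_Ioi] at hu
  rw [(hderiv u hu).deriv, sub_pos, one_lt_div (Real.rpow_pos_of_pos (invPowDiff_pos hs hu) _)]
  exact invPowDiff_rpow_lt hs hu

theorem f_strictMono (n : ℕ) (hn : 1 ≤ n) :
    StrictMonoOn
      (fun u : ℝ =>
        ((u ^ (-(n : ℝ)) - (u + 1) ^ (-(n : ℝ))) / n) ^ (-(1 : ℝ) / (n + 1)) - u)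
      (Set.Ioi (0 : ℝ)) :=
  strictMonoOn_invPowDiff_rpow_sub (Nat.cast_pos.2 hn)
end

section
/- For every positive integer n and all u > 0, [ (u^{-(n+1)} - (u+1)^{-(n+1)})/(n+1) ]^{-1/(n+2)} < [ (u^{-n} - (u+1)^{-n})/n ]^{-1/(n+1)}. -/
/-!
On `[u, u + 1]` put `f x = x ^ (-(n + 1))` and `q = (n + 2) / (n + 1)`. The right-hand bracket is
the mean `B` of `f` and the left-hand bracket is the mean `A` of `f ^ q = x ^ (-(n + 2))`. Since
`f` is injective and `t ↦ t ^ q` is strictly convex, strict Jensen gives `B ^ q < A`, and raising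
both sides to the negative power `-1 / (n + 2)` turns this into the claim, because
`(B ^ q) ^ (-1 / (n + 2)) = B ^ (-1 / (n + 1))`.
-/

open Set MeasureTheory intervalIntegral Real
open scoped Interval

theorem StrictConvexOn.map_intervalAverage_lt_of_injOn {s : Set ℝ} {f g : ℝ → ℝ} {a b : ℝ}
    (hg : StrictConvexOn ℝ s g) (hgc : ContinuousOn g s) (hsc : IsClosed s)
    (hf : ContinuousOn f [[a, b]]) (hfs : MapsTo f [[a, b]] s) (hinj : InjOn f (Ι a b))
    (hab : a ≠ b) :
    g (⨍ x in a..b, f x) < ⨍ x in a..b, g (f x) := by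
  have hint : ∀ {φ : ℝ → ℝ}, ContinuousOn φ [[a, b]] → Integrable φ (volume.restrict (Ι a b)) :=
    fun hφ => (hφ.integrableOn_uIcc).mono_set uIoc_subset_uIcc
  have : IsFiniteMeasure (volume.restrict (Ι a b)) :=
    isFiniteMeasure_restrict.2 (by simp [Real.volume_uIoc])
  refine (hg.ae_eq_const_or_map_average_lt hgc hsc ?_ (hint hf)
    (hint (hgc.comp hf hfs))).resolve_left ?_
  · exact (ae_restrict_mem measurableSet_uIoc).mono fun x hx => hfs (uIoc_subset_uIcc hx)
  · intro hconst
    set c := ⨍ x in a..b, f x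
    have hlevel : ({x | x ∈ Ι a b ∧ f x = c} : Set ℝ).Subsingleton :=
      fun x hx y hy => hinj hx.1 hy.1 (hx.2.trans hy.2.symm)
    have hnull : volume (Ι a b) = 0 := by
      rw [← Measure.restrict_eq_zero, ← ae_eq_bot, ← Filter.eventually_false_iff_eq_bot]
      filter_upwards [ae_restrict_mem measurableSet_uIoc, hconst,
        ae_restrict_of_ae ((measure_eq_zero_iff_ae_notMem).1 (hlevel.measure_zero volume))]
        with x hx hfx hnot using hnot ⟨hx, hfx⟩
    rw [Real.volume_uIoc, ENNReal.ofReal_eq_zero, abs_nonpos_iff, sub_eq_zero] at hnull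
    exact hab hnull.symm

theorem integral_rpow_neg_add_one {a b s : ℝ} (h0 : (0 : ℝ) ∉ [[a, b]]) (hs : s ≠ 0) :
    ∫ x in a..b, x ^ (-(s + 1)) = (a ^ (-s) - b ^ (-s)) / s := by
  rw [integral_rpow (Or.inr ⟨fun h => hs (by linarith), h0⟩), neg_add, neg_add_cancel_right,
    div_neg, ← neg_div, neg_sub]

theorem rpow_intervalAverage_lt_of_injOn {f : ℝ → ℝ} {a b q : ℝ} (hq : 1 < q)
    (hf : ContinuousOn f [[a, b]]) (hf0 : ∀ x ∈ [[a, b]], 0 ≤ f x) (hinj : InjOn f (Ι a b))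
    (hab : a ≠ b) :
    (⨍ x in a..b, f x) ^ q < ⨍ x in a..b, f x ^ q :=
  (strictConvexOn_rpow hq).map_intervalAverage_lt_of_injOn
    (continuousOn_id.rpow_const fun _ _ => Or.inr (by linarith)) isClosed_Ici hf hf0 hinj hab

theorem stolarsky_step (n : ℕ) (hn : 1 ≤ n) (u : ℝ) (hu : 0 < u) :
    ((u ^ (-((n : ℝ) + 1)) - (u + 1) ^ (-((n : ℝ) + 1))) / ((n : ℝ) + 1)) ^
        (-(1 : ℝ) / ((n : ℝ) + 2)) <
      ((u ^ (-(n : ℝ)) - (u + 1) ^ (-(n : ℝ))) / (n : ℝ)) ^ (-(1 : ℝ) / ((n : ℝ) + 1)) := by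
  have hn0 : (0 : ℝ) < n := by exact_mod_cast hn
  have hpos : ∀ x ∈ [[u, u + 1]], 0 < x := fun x hx =>
    hu.trans_le (by rw [uIcc_of_le (by linarith)] at hx; exact hx.1)
  have h0 : (0 : ℝ) ∉ [[u, u + 1]] := fun h => (hpos 0 h).false
  set q : ℝ := ((n : ℝ) + 2) / ((n : ℝ) + 1) with hq
  set B := (u ^ (-(n : ℝ)) - (u + 1) ^ (-(n : ℝ))) / (n : ℝ)
  have hB : ⨍ x in u..u + 1, x ^ (-((n : ℝ) + 1)) = B := by
    rw [interval_average_eq_div, add_sub_cancel_left, div_one, integral_rpow_neg_add_one h0 hn0.ne']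
  have hA : ⨍ x in u..u + 1, (x ^ (-((n : ℝ) + 1))) ^ q =
      (u ^ (-((n : ℝ) + 1)) - (u + 1) ^ (-((n : ℝ) + 1))) / ((n : ℝ) + 1) := by
    rw [interval_average_eq_div, add_sub_cancel_left, div_one,
      ← integral_rpow_neg_add_one h0 (by positivity : (n : ℝ) + 1 ≠ 0)]
    refine integral_congr fun x hx => ?_
    rw [← rpow_mul (hpos x hx).le]
    congr 1
    rw [hq]
    field_simp
    ring
  have hjensen : (⨍ x in u..u + 1, x ^ (-((n : ℝ) + 1))) ^ q <
      ⨍ x in u..u + 1, (x ^ (-((n : ℝ) + 1))) ^ q := rpow_intervalAverage_lt_of_injOn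
    (by rw [lt_div_iff₀ (by positivity)]; linarith)
    (continuousOn_id.rpow_const fun x hx => Or.inl (hpos x hx).ne')
    (fun x hx => (rpow_pos_of_pos (hpos x hx) _).le)
    ((strictAntiOn_rpow_Ioi_of_exponent_neg (by linarith)).injOn.mono
      fun x hx => hpos x (uIoc_subset_uIcc hx))
    (by linarith : u ≠ u + 1)
  rw [hA, hB] at hjensen
  have hBpos : 0 < B :=
    div_pos (sub_pos.2 (rpow_lt_rpow_of_neg hu (by linarith) (by linarith))) hn0
  calc _ < (B ^ q) ^ (-(1 : ℝ) / ((n : ℝ) + 2)) :=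
        rpow_lt_rpow_of_neg (by positivity) hjensen
          (div_neg_of_neg_of_pos (by norm_num) (by positivity))
    _ = B ^ (-(1 : ℝ) / ((n : ℝ) + 1)) := by
        rw [← rpow_mul hBpos.le]
        congr 1
        rw [hq]
        field_simp
end

section
/- For distinct positive reals a, b, the generalized mean S_p(a,b) = [(a^p - b^p)/(p(a-b))]^{1/(p-1)} is strictly increasing in p (for p ≠ 0, 1). -/
/-!
With `H p = ∫ t in a..b, t ^ (p - 1)` one has `(a ^ p - b ^ p) / (p * (a - b)) = H p / H 1`, so
`log S_p = (log H p - log H 1) / (p - 1)` is a secant slope of `log H` through `1`. By the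
strict Hölder inequality `log H` is strictly convex, and secant slopes of a strictly convex
function increase.
-/

open Real Set intervalIntegral

theorem integral_rpow_mul_rpow_lt {f g : ℝ → ℝ} {a b la lb : ℝ} (hab : a < b)
    (hf : ContinuousOn f (Icc a b)) (hg : ContinuousOn g (Icc a b))
    (hf0 : ∀ t ∈ Icc a b, 0 < f t) (hg0 : ∀ t ∈ Icc a b, 0 < g t)
    (hfg : ∃ c ∈ Icc a b, ∃ d ∈ Icc a b, f c * g d ≠ f d * g c)
    (hla : 0 < la) (hlb : 0 < lb) (hl : la + lb = 1) :
    ∫ t in a..b, f t ^ la * g t ^ lb < (∫ t in a..b, f t) ^ la * (∫ t in a..b, g t) ^ lb := by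
  set A := ∫ t in a..b, f t
  set B := ∫ t in a..b, g t
  have hA : 0 < A := integral_pos hab hf (fun t ht => (hf0 t (Ioc_subset_Icc_self ht)).le)
    ⟨a, left_mem_Icc.2 hab.le, hf0 a (left_mem_Icc.2 hab.le)⟩
  have hB : 0 < B := integral_pos hab hg (fun t ht => (hg0 t (Ioc_subset_Icc_self ht)).le)
    ⟨a, left_mem_Icc.2 hab.le, hg0 a (left_mem_Icc.2 hab.le)⟩
  have hu : ∀ t ∈ Icc a b, 0 ≤ f t / A := fun t ht => (div_pos (hf0 t ht) hA).le
  have hv : ∀ t ∈ Icc a b, 0 ≤ g t / B := fun t ht => (div_pos (hg0 t ht) hB).le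
  -- Strict weighted AM-GM for `f / A` and `g / B`, which differ somewhere as `f`, `g` are not
  -- proportional; integrating it gives the inequality.
  have hstrict : ∃ c ∈ Icc a b,
      (f c / A) ^ la * (g c / B) ^ lb < la * (f c / A) + lb * (g c / B) := by
    obtain ⟨c, hc, d, hd, hne⟩ := hfg
    have : f c / A ≠ g c / B ∨ f d / A ≠ g d / B := by
      by_contra! h
      rw [div_eq_div_iff hA.ne' hB.ne', div_eq_div_iff hA.ne' hB.ne'] at h
      have : (f c * g d - f d * g c) * (A * B) = 0 := by
        linear_combination (g d * A) * h.1 - (g c * A) * h.2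
      exact hne (sub_eq_zero.1 ((mul_eq_zero.1 this).resolve_right (by positivity)))
    rcases this with h | h
    · exact ⟨c, hc, (geom_mean_lt_arith_mean2_weighted_iff_of_pos hla hlb
        (hu c hc) (hv c hc) hl).2 h⟩
    · exact ⟨d, hd, (geom_mean_lt_arith_mean2_weighted_iff_of_pos hla hlb
        (hu d hd) (hv d hd) hl).2 h⟩
  have key : ∫ t in a..b, (f t / A) ^ la * (g t / B) ^ lb
      < ∫ t in a..b, (la * (f t / A) + lb * (g t / B)) :=
    integral_lt_integral_of_continuousOn_of_le_of_exists_lt hab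
    (((hf.div_const A).rpow_const fun _ _ => Or.inr hla.le).mul
      ((hg.div_const B).rpow_const fun _ _ => Or.inr hlb.le))
    ((continuousOn_const.mul (hf.div_const A)).add (continuousOn_const.mul (hg.div_const B)))
    (fun t ht => geom_mean_le_arith_mean2_weighted hla.le hlb.le
      (hu t (Ioc_subset_Icc_self ht)) (hv t (Ioc_subset_Icc_self ht)) hl) hstrict
  have hlhs : ∫ t in a..b, (f t / A) ^ la * (g t / B) ^ lb
      = (∫ t in a..b, f t ^ la * g t ^ lb) / (A ^ la * B ^ lb) := by
    rw [← intervalIntegral.integral_div]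
    refine integral_congr fun t ht => ?_
    rw [uIcc_of_le hab.le] at ht
    simp only [div_rpow (hf0 t ht).le hA.le, div_rpow (hg0 t ht).le hB.le]
    ring
  have hrhs : ∫ t in a..b, (la * (f t / A) + lb * (g t / B)) = 1 := by
    rw [integral_add (((hf.intervalIntegrable_of_Icc hab.le).div_const A).const_mul la)
        (((hg.intervalIntegrable_of_Icc hab.le).div_const B).const_mul lb),
      integral_const_mul, integral_const_mul, intervalIntegral.integral_div,
      intervalIntegral.integral_div, div_self hA.ne', div_self hB.ne', mul_one, mul_one, hl]
  rwa [hlhs, hrhs, div_lt_one (by positivity)] at key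

theorem integral_rpow_pos {a b : ℝ} (ha : 0 < a) (hab : a < b) (r : ℝ) :
    0 < ∫ t in a..b, t ^ r :=
  intervalIntegral_pos_of_pos_on
    (intervalIntegral.intervalIntegrable_rpow (Or.inr fun h => by
      rw [uIcc_of_le hab.le] at h; exact h.1.not_gt ha))
    (fun t ht => rpow_pos_of_pos (ha.trans ht.1) r) hab

theorem strictConvexOn_log_integral_rpow_sub_one {a b : ℝ} (ha : 0 < a) (hab : a < b) :
    StrictConvexOn ℝ univ fun p : ℝ => log (∫ t in a..b, t ^ (p - 1)) := by
  refine ⟨convex_univ, fun p _ q _ hpq la lb hla hlb hl => ?_⟩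
  have hb : 0 < b := ha.trans hab
  have hpos : ∀ t ∈ Icc a b, 0 < t := fun t ht => ha.trans_le ht.1
  have hcont : ∀ r : ℝ, ContinuousOn (fun t : ℝ => t ^ r) (Icc a b) := fun r =>
    continuousOn_id.rpow_const fun t ht => Or.inl (hpos t ht).ne'
  have hnprop : a ^ (p - 1) * b ^ (q - 1) ≠ b ^ (p - 1) * a ^ (q - 1) := by
    intro h
    have hlog := congrArg log h
    rw [log_mul (by positivity) (by positivity), log_mul (by positivity) (by positivity),
      log_rpow ha, log_rpow hb, log_rpow hb, log_rpow ha] at hlog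
    have : (p - q) * (log b - log a) = 0 := by linear_combination -hlog
    rcases mul_eq_zero.1 this with h | h
    · exact hpq (sub_eq_zero.1 h)
    · exact (log_lt_log ha hab).ne' (sub_eq_zero.1 h)
  have hholder := integral_rpow_mul_rpow_lt hab (hcont _) (hcont _)
    (fun t ht => rpow_pos_of_pos (hpos t ht) _) (fun t ht => rpow_pos_of_pos (hpos t ht) _)
    ⟨a, left_mem_Icc.2 hab.le, b, right_mem_Icc.2 hab.le, hnprop⟩ hla hlb hl
  have hmix : ∫ t in a..b, (t ^ (p - 1)) ^ la * (t ^ (q - 1)) ^ lb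
      = ∫ t in a..b, t ^ (la * p + lb * q - 1) := by
    refine integral_congr fun t ht => ?_
    rw [uIcc_of_le hab.le] at ht
    rw [← rpow_mul (hpos t ht).le, ← rpow_mul (hpos t ht).le, ← rpow_add (hpos t ht)]
    congr 1
    linear_combination -hl
  rw [hmix] at hholder
  simp only [smul_eq_mul]
  calc log (∫ t in a..b, t ^ (la * p + lb * q - 1))
      < log ((∫ t in a..b, t ^ (p - 1)) ^ la * (∫ t in a..b, t ^ (q - 1)) ^ lb) :=
        log_lt_log (integral_rpow_pos ha hab _) hholder
    _ = la * log (∫ t in a..b, t ^ (p - 1)) + lb * log (∫ t in a..b, t ^ (q - 1)) := by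
        have hp := integral_rpow_pos ha hab (p - 1)
        have hq := integral_rpow_pos ha hab (q - 1)
        rw [log_mul (by positivity) (by positivity), log_rpow hp, log_rpow hq]

theorem integral_rpow_sub_one_div_integral_rpow_zero {a b p : ℝ} (ha : 0 < a) (hb : 0 < b)
    (hp : p ≠ 0) :
    (∫ t in a..b, t ^ (p - 1)) / (∫ t in a..b, t ^ ((1 : ℝ) - 1))
      = (a ^ p - b ^ p) / (p * (a - b)) := by
  have h0 : (0 : ℝ) ∉ uIcc a b := fun h => (lt_min ha hb).not_ge h.1
  rw [integral_rpow (Or.inr ⟨by simpa [sub_eq_iff_eq_add] using hp, h0⟩), sub_self,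
    integral_rpow (Or.inl neg_one_lt_zero)]
  simp only [sub_add_cancel, zero_add, rpow_one, div_one]
  rw [div_div, ← neg_sub a, ← neg_sub (a ^ p), mul_neg, neg_div_neg_eq]

theorem StrictConvexOn.strictMonoOn_div_rpow_one_div_sub {s : Set ℝ} {F : ℝ → ℝ} {c : ℝ}
    (hconv : StrictConvexOn ℝ s fun p => log (F p)) (hF : ∀ p ∈ s, 0 < F p) (hc : c ∈ s) :
    StrictMonoOn (fun p => (F p / F c) ^ (1 / (p - c))) (s \ {c}) := by
  intro p hp q hq hpq
  dsimp only
  rw [rpow_def_of_pos (div_pos (hF p hp.1) (hF c hc)),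
    rpow_def_of_pos (div_pos (hF q hq.1) (hF c hc)), exp_lt_exp,
    log_div (hF p hp.1).ne' (hF c hc).ne', log_div (hF q hq.1).ne' (hF c hc).ne',
    mul_one_div, mul_one_div]
  exact hconv.secant_strict_mono hc hp.1 hq.1 hp.2 hq.2 hpq

theorem stolarsky_strictMono (a b : ℝ) (ha : 0 < a) (hb : 0 < b) (hab : a ≠ b) :
    StrictMonoOn (fun p : ℝ => ((a ^ p - b ^ p) / (p * (a - b))) ^ (1 / (p - 1)))
      {p : ℝ | p ≠ 0 ∧ p ≠ 1} := by
  wlog hlt : a < b generalizing a b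
  · have hsymm : ∀ p : ℝ, (a ^ p - b ^ p) / (p * (a - b)) = (b ^ p - a ^ p) / (p * (b - a)) :=
      fun p => by rw [← neg_sub b a, ← neg_sub (b ^ p), mul_neg, neg_div_neg_eq]
    simpa only [hsymm] using this b a hb ha hab.symm (hab.symm.lt_of_le (not_lt.1 hlt))
  have hmono := (strictConvexOn_log_integral_rpow_sub_one ha hlt).strictMonoOn_div_rpow_one_div_sub
    (fun p _ => integral_rpow_pos ha hlt _) (mem_univ 1)
  refine (hmono.mono fun p hp => ⟨mem_univ p, hp.2⟩).congr fun p hp => ?_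
  simp only [integral_rpow_sub_one_div_integral_rpow_zero ha hb hp.1]
end

section
/- For every positive integer n, lim_{u→∞} ( [ (u^{-n} - (u+1)^{-n})/n ]^{-1/(n+1)} - u ) = 1/2. -/
/-!
With `t = 1/u` one has `(u⁻ⁿ - (u+1)⁻ⁿ)/n = u^{-(n+1)} ψ(t)`, where `ψ(t) = (1 - (1+t)⁻ⁿ)/(n t)`
is smooth at `0` with `ψ(0) = 1` and `ψ'(0) = -(n+1)/2`. Hence the expression equals
`(φ(t) - φ(0))/t` for `φ = ψ ^ (-1/(n+1))`, which tends to `φ'(0) = 1/2`.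
-/

open Filter Topology Finset

theorem HasDerivAt.tendsto_mul_inv_sub_atTop {φ : ℝ → ℝ} {L : ℝ} (h : HasDerivAt φ L 0) :
    Tendsto (fun u : ℝ => u * (φ u⁻¹ - φ 0)) atTop (𝓝 L) := by
  have hslope := (hasDerivAt_iff_tendsto_slope.mp h).comp
    (tendsto_inv_atTop_nhdsGT_zero.mono_right (nhdsWithin_mono _ fun x hx => ne_of_gt hx))
  refine hslope.congr fun u => ?_
  simp [slope_def_field, div_eq_inv_mul]

theorem sum_range_natCast_mul_two (n : ℕ) : (∑ k ∈ range n, (k : ℝ)) * 2 = n * (n - 1) := by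
  induction n with
  | zero => simp
  | succ n ih =>
    rw [sum_range_succ]
    push_cast
    linarith

/-- `(1 - (1 + t)⁻ⁿ) / (n t)`, written as a quotient of polynomials so that it is smooth at
`t = 0`. -/
noncomputable def secantRatio (n : ℕ) (t : ℝ) : ℝ :=
  (∑ k ∈ range n, (1 + t) ^ k) / (n * (1 + t) ^ n)

theorem secantRatio_zero {n : ℕ} (hn : n ≠ 0) : secantRatio n 0 = 1 := by
  simp [secantRatio, hn]

theorem secantRatio_nonneg (n : ℕ) {t : ℝ} (ht : 0 ≤ t) : 0 ≤ secantRatio n t := by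
  unfold secantRatio
  positivity

theorem hasDerivAt_secantRatio_zero {n : ℕ} (hn : n ≠ 0) :
    HasDerivAt (secantRatio n) (-(n + 1) / 2) 0 := by
  have hshift : HasDerivAt (fun t : ℝ => 1 + t) 1 0 := (hasDerivAt_id 0).const_add 1
  have hnum : HasDerivAt (fun t : ℝ => ∑ k ∈ range n, (1 + t) ^ k) (∑ k ∈ range n, (k : ℝ)) 0 :=
    HasDerivAt.fun_sum fun k _ => by simpa using hshift.fun_pow k
  have hden : HasDerivAt (fun t : ℝ => n * (1 + t) ^ n) (n * n) 0 := by
    simpa using (hshift.pow n).const_mul (n : ℝ)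
  have hn' : (n : ℝ) ≠ 0 := Nat.cast_ne_zero.mpr hn
  refine (hnum.fun_div hden (by simpa using hn')).congr_deriv ?_
  have hsum := sum_range_natCast_mul_two n
  simp only [add_zero, one_pow, mul_one, sum_const, card_range, nsmul_eq_mul]
  field_simp
  linarith

theorem hasDerivAt_secantRatio_rpow_zero {n : ℕ} (hn : n ≠ 0) :
    HasDerivAt (fun t => secantRatio n t ^ (-(1 : ℝ) / (n + 1))) (1 / 2) 0 := by
  have h := (hasDerivAt_secantRatio_zero hn).rpow_const (p := -(1 : ℝ) / (n + 1))
    (Or.inl (by simp [secantRatio_zero hn]))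
  convert h using 1
  rw [secantRatio_zero hn, Real.one_rpow]
  field_simp

theorem rpow_neg_sub_rpow_neg_div_eq_secantRatio (n : ℕ) {u : ℝ} (hu : 0 < u) :
    (u ^ (-(n : ℝ)) - (u + 1) ^ (-(n : ℝ))) / n = (u ^ (n + 1))⁻¹ * secantRatio n u⁻¹ := by
  have hgeom : (∑ k ∈ range n, (1 + u⁻¹) ^ k) = ((1 + u⁻¹) ^ n - 1) * u := by
    rw [← geom_sum_mul, add_sub_cancel_left, inv_mul_cancel_right₀ hu.ne']
  have hsplit : u + 1 = u * (1 + u⁻¹) := by field_simp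
  rw [Real.rpow_neg hu.le, Real.rpow_neg (by positivity), Real.rpow_natCast, Real.rpow_natCast,
    secantRatio, hgeom, hsplit, mul_pow]
  field_simp
  ring

theorem inv_pow_succ_mul_rpow {u x : ℝ} (hu : 0 ≤ u) (hx : 0 ≤ x) (n : ℕ) :
    ((u ^ (n + 1))⁻¹ * x) ^ (-(1 : ℝ) / (n + 1)) = u * x ^ (-(1 : ℝ) / (n + 1)) := by
  have hroot : (u ^ (n + 1)) ^ ((n + 1 : ℝ))⁻¹ = u := by
    exact_mod_cast Real.pow_rpow_inv_natCast hu n.succ_ne_zero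
  rw [Real.mul_rpow (by positivity) hx, Real.inv_rpow (by positivity), neg_div,
    Real.rpow_neg (by positivity), inv_inv, one_div, hroot]

open Filter in
theorem f_limit (n : ℕ) (hn : 1 ≤ n) :
    Tendsto
      (fun u : ℝ =>
        ((u ^ (-(n : ℝ)) - (u + 1) ^ (-(n : ℝ))) / n) ^ (-(1 : ℝ) / (n + 1)) - u)
      atTop (nhds (1 / 2)) := by
  have hn0 : n ≠ 0 := Nat.one_le_iff_ne_zero.mp hn
  have hlim := (hasDerivAt_secantRatio_rpow_zero hn0).tendsto_mul_inv_sub_atTop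
  simp only [secantRatio_zero hn0, Real.one_rpow] at hlim
  refine hlim.congr' ?_
  filter_upwards [eventually_gt_atTop 0] with u hu
  rw [rpow_neg_sub_rpow_neg_div_eq_secantRatio n hu,
    inv_pow_succ_mul_rpow hu.le (secantRatio_nonneg n (inv_nonneg.mpr hu.le)), mul_sub_one]
end
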